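/- Let F₂ be a real-valued dyadic step function on [0,1)² and B₄(I×J×Ω) := ( |J|^{-1}∫_J ( |I|^{-1}∫_I F₂(x,y) w_{I×Ω}(x) dx )² dy )². Then for every multitile P = I×J×Ω, the first-order difference satisfies (□B₄)(P) = Σ_{β∈{0,1}} Π_{γ∈{0,1}} [ [F₂(x,y)]²_{x,I×Ω_γ} ]_{y,J_β,0} + Σ_{γ∈{0,1}} [ [F₂(x,y)]²_{x,I×Ω_γ} ]²_{y,J,1} + 4 Σ_{ε∈{0,1}} [ [F₂(x,y)]_{x,I×Ω_0} [F₂(x,y)]_{x,I×Ω_1} ]²_{y,J,ε}; in particular (□B₄)(P) ≥ 0. -/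

import Mathlib

open MeasureTheory

/-- The `j`-th binary digit of a nonnegative real number `x`. -/
noncomputable def bdigit (x : ℝ) (j : ℤ) : ℕ := (Int.toNat ⌊x / 2 ^ j⌋) % 2

/-- Binary digitwise addition (XOR) of nonnegative reals. -/
noncomputable def dxor (x y : ℝ) : ℝ :=
  ∑' j : ℤ, (((bdigit x j + bdigit y j) % 2 : ℕ) : ℝ) * 2 ^ j

/-- The dyadic interval `[2^{-k} l, 2^{-k} (l+1))`. -/
def dyadicI (k : ℤ) (l : ℕ) : Set ℝ :=
  Set.Ico ((2 : ℝ) ^ (-k) * l) ((2 : ℝ) ^ (-k) * (l + 1))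

/-- The L^∞-normalized Walsh wave packet `w_{I,n}` for `I = [2^{-k} l, 2^{-k}(l+1))`. -/
noncomputable def walsh (k : ℤ) (l n : ℕ) (x : ℝ) : ℝ :=
  Set.indicator (dyadicI k l)
    (fun x => (-1 : ℝ) ^ (∑ j ∈ Finset.range (n + 1),
      (Nat.testBit n j).toNat * bdigit x (-(j : ℤ) - k - 1))) x

/-- The Walsh–Fourier average `[f]_{I,n} = |I|^{-1} ∫_I f w_{I,n}`. -/
noncomputable def avg (k : ℤ) (l n : ℕ) (f : ℝ → ℝ) : ℝ :=
  (2 : ℝ) ^ k * ∫ x in dyadicI k l, f x * walsh k l n x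

/-- A real-valued dyadic step function supported on `[0,1)²`. -/
def IsDyadicStep (F : ℝ → ℝ → ℝ) : Prop :=
  ∃ (s : Finset ((ℤ × ℕ) × (ℤ × ℕ))) (c : (ℤ × ℕ) × (ℤ × ℕ) → ℝ),
    (∀ p ∈ s, dyadicI p.1.1 p.1.2 ⊆ Set.Ico (0 : ℝ) 1 ∧
      dyadicI p.2.1 p.2.2 ⊆ Set.Ico (0 : ℝ) 1) ∧
    ∀ x y : ℝ, F x y = ∑ p ∈ s, c p * Set.indicator (dyadicI p.1.1 p.1.2) 1 x *
      Set.indicator (dyadicI p.2.1 p.2.2) 1 y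

/-- `F` is constant on dyadic squares with sides of length `2^{-M}`. -/
def ConstOnSquares (M : ℕ) (F : ℝ → ℝ → ℝ) : Prop :=
  ∀ l₁ l₂ : ℕ, ∀ x ∈ dyadicI (M : ℤ) l₁, ∀ x' ∈ dyadicI (M : ℤ) l₁,
    ∀ y ∈ dyadicI (M : ℤ) l₂, ∀ y' ∈ dyadicI (M : ℤ) l₂, F x y = F x' y'

/-- `B₄` evaluated at the tile `(k, l₁, l₂, n)`. -/
noncomputable def B4 (F : ℝ → ℝ → ℝ) (k : ℤ) (l₁ l₂ n : ℕ) : ℝ :=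
  (avg k l₂ 0 (fun y => (avg k l₁ n (fun x => F x y)) ^ 2)) ^ 2

/-!
Put `u_α(y) = [F₂(x,y)]_{x,I_α×Ω}` and `w_γ(y) = [F₂(x,y)]_{x,I×Ω_γ}`. On the half `I_α` the
packet `w_{I×Ω_γ}` equals `(-1)^{γα} w_{I_α×Ω}`, so `w_γ = (u₀ + (-1)^γ u₁)/2`; in the same way
`[h]_{y,J,ε} = ([h]_{y,J₀,0} + (-1)^ε [h]_{y,J₁,0})/2`. Hence every term of `□B₄` is a
polynomial in the six averages `[u_α u_α']_{y,J_β,0}`, and the identity is a polynomial identity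
in them. On the right-hand side the product terms are products of averages of squares against
`w_{J_β,0} = 𝟙_{J_β} ≥ 0` and the remaining terms are squares.
-/

lemma measurableSet_dyadicI (k : ℤ) (l : ℕ) : MeasurableSet (dyadicI k l) :=
  measurableSet_Ico

instance (k : ℤ) (l : ℕ) : IsFiniteMeasure (volume.restrict (dyadicI k l)) :=
  Real.isFiniteMeasure_restrict_Ico _ _

lemma MeasureTheory.MemLp.integrableOn_dyadicI {f : ℝ → ℝ} (hf : MemLp f ⊤ volume)
    (k : ℤ) (l : ℕ) : IntegrableOn f (dyadicI k l) :=
  (hf.restrict _).integrable le_top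

lemma dyadicI_eq_union (k : ℤ) (l : ℕ) :
    dyadicI k l = dyadicI (k + 1) (2 * l) ∪ dyadicI (k + 1) (2 * l + 1) := by
  have h : (2 : ℝ) ^ (-(k + 1)) = 2 ^ (-k) / 2 := by
    rw [neg_add, zpow_add₀ two_ne_zero]
    norm_num
    ring
  have hpos : (0 : ℝ) < 2 ^ (-k) := by positivity
  unfold dyadicI
  push_cast [h]
  rw [Set.Ico_union_Ico_eq_Ico (by nlinarith) (by nlinarith)]
  congr 1 <;> ring

lemma disjoint_dyadicI_two_mul (k : ℤ) (l : ℕ) :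
    Disjoint (dyadicI (k + 1) (2 * l)) (dyadicI (k + 1) (2 * l + 1)) := by
  unfold dyadicI
  push_cast
  exact Set.Ico_disjoint_Ico_same

lemma bdigit_of_mem_dyadicI {k : ℤ} {m : ℕ} {x : ℝ} (hx : x ∈ dyadicI k m) :
    bdigit x (-k) = m % 2 := by
  obtain ⟨hlo, hhi⟩ := hx
  have hpos : (0 : ℝ) < 2 ^ (-k) := by positivity
  have hfloor : ⌊x / 2 ^ (-k)⌋ = m := by
    rw [Int.floor_eq_iff, le_div_iff₀ hpos, div_lt_iff₀ hpos]
    push_cast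
    constructor <;> linarith
  rw [bdigit, hfloor, Int.toNat_natCast]

lemma measurable_bdigit (j : ℤ) : Measurable fun x : ℝ => bdigit x j :=
  (measurable_of_countable fun z : ℤ => z.toNat % 2).comp
    (Int.measurable_floor.comp (measurable_id.div_const _))

lemma measurable_walsh (k : ℤ) (l n : ℕ) : Measurable (walsh k l n) :=
  ((measurable_of_countable fun m : ℕ => (-1 : ℝ) ^ m).comp
    (Finset.measurable_sum _ fun _ _ => (measurable_bdigit _).const_mul _)).indicator
    (measurableSet_dyadicI k l)

lemma abs_walsh_le_one (k : ℤ) (l n : ℕ) (x : ℝ) : |walsh k l n x| ≤ 1 := by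
  unfold walsh
  by_cases hx : x ∈ dyadicI k l <;> simp [hx]

lemma walsh_zero_nonneg (k : ℤ) (l : ℕ) (x : ℝ) : 0 ≤ walsh k l 0 x :=
  Set.indicator_nonneg (fun _ _ => by simp) x

lemma memLp_walsh (k : ℤ) (l n : ℕ) : MemLp (walsh k l n) ⊤ volume :=
  memLp_top_of_bound (measurable_walsh k l n).aestronglyMeasurable 1
    (ae_of_all _ (abs_walsh_le_one k l n))

lemma sum_range_testBit_mul_of_le (d : ℕ → ℕ) {m N : ℕ} (h : m ≤ N) :
    ∑ j ∈ Finset.range N, (m.testBit j).toNat * d j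
      = ∑ j ∈ Finset.range m, (m.testBit j).toNat * d j := by
  refine (Finset.sum_subset (Finset.range_subset_range.2 h) fun j _ hj => ?_).symm
  have hmj : m < 2 ^ j :=
    Nat.lt_two_pow_self.trans_le (Nat.pow_le_pow_right two_pos (by simpa using hj))
  simp [Nat.testBit_eq_false_of_lt hmj]

lemma sum_range_testBit_two_mul_add {γ : ℕ} (hγ : γ < 2) (n : ℕ) (d : ℕ → ℕ) :
    ∑ j ∈ Finset.range (2 * n + γ + 1), ((2 * n + γ).testBit j).toNat * d j
      = γ * d 0 + ∑ j ∈ Finset.range (n + 1), (n.testBit j).toNat * d (j + 1) := by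
  have hhalf : (2 * n + γ) / 2 = n := by omega
  have hbit : ((2 * n + γ).testBit 0).toNat = γ := by
    interval_cases γ <;> simp [Nat.testBit_zero]
  rw [Finset.sum_range_succ', add_comm, hbit]
  simp only [Nat.testBit_add_one, hhalf]
  rw [sum_range_testBit_mul_of_le _ (by omega : n ≤ 2 * n + γ),
    sum_range_testBit_mul_of_le _ (by omega : n ≤ n + 1)]

lemma walsh_two_mul_add {k : ℤ} {l n γ α : ℕ} (hγ : γ < 2) (hα : α < 2) {x : ℝ}
    (hx : x ∈ dyadicI (k + 1) (2 * l + α)) :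
    walsh k l (2 * n + γ) x = (-1 : ℝ) ^ (γ * α) * walsh (k + 1) (2 * l + α) n x := by
  have hx' : x ∈ dyadicI k l := by
    rw [dyadicI_eq_union]
    interval_cases α
    exacts [Or.inl hx, Or.inr hx]
  have hdigit : bdigit x (-((0 : ℕ) : ℤ) - k - 1) = α := by
    rw [show -((0 : ℕ) : ℤ) - k - 1 = -(k + 1) by push_cast; ring, bdigit_of_mem_dyadicI hx]
    omega
  unfold walsh
  rw [Set.indicator_of_mem hx', Set.indicator_of_mem hx, ← pow_add,
    sum_range_testBit_two_mul_add hγ, hdigit]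
  congr 3 with j
  congr 2
  push_cast
  ring

lemma MeasureTheory.IntegrableOn.mul_walsh {f : ℝ → ℝ} {s : Set ℝ} (hf : IntegrableOn f s)
    (k : ℤ) (l n : ℕ) : IntegrableOn (fun x => f x * walsh k l n x) s :=
  hf.mul_of_top_left ((memLp_walsh k l n).restrict s)

section avg

variable {k : ℤ} {l n : ℕ}

lemma avg_add {f g : ℝ → ℝ} (hf : IntegrableOn f (dyadicI k l))
    (hg : IntegrableOn g (dyadicI k l)) :
    avg k l n (fun x => f x + g x) = avg k l n f + avg k l n g := by
  simp only [avg, add_mul, integral_add (hf.mul_walsh k l n) (hg.mul_walsh k l n), mul_add]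

lemma avg_const_mul (c : ℝ) (f : ℝ → ℝ) :
    avg k l n (fun x => c * f x) = c * avg k l n f := by
  simp only [avg, mul_assoc, integral_const_mul]
  ring

lemma avg_finsetSum {ι : Type*} (s : Finset ι) {f : ι → ℝ → ℝ}
    (hf : ∀ i ∈ s, IntegrableOn (f i) (dyadicI k l)) :
    avg k l n (fun x => ∑ i ∈ s, f i x) = ∑ i ∈ s, avg k l n (f i) := by
  simp only [avg, Finset.sum_mul]
  rw [integral_finsetSum _ fun i hi => (hf i hi).mul_walsh k l n, Finset.mul_sum]

lemma avg_zero_nonneg {g : ℝ → ℝ} (hg : ∀ y, 0 ≤ g y) : 0 ≤ avg k l 0 g :=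
  mul_nonneg (by positivity) (setIntegral_nonneg (measurableSet_dyadicI k l)
    fun y _ => mul_nonneg (hg y) (walsh_zero_nonneg k l y))

lemma avg_two_mul_add {f : ℝ → ℝ} (hf : IntegrableOn f (dyadicI k l)) {γ : ℕ}
    (hγ : γ < 2) :
    avg k l (2 * n + γ) f
      = (avg (k + 1) (2 * l) n f + (-1) ^ γ * avg (k + 1) (2 * l + 1) n f) / 2 := by
  have hchild : ∀ α < 2, ∫ x in dyadicI (k + 1) (2 * l + α), f x * walsh k l (2 * n + γ) x
      = (-1) ^ (γ * α) *
        ∫ x in dyadicI (k + 1) (2 * l + α), f x * walsh (k + 1) (2 * l + α) n x := by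
    intro α hα
    rw [← integral_const_mul]
    refine setIntegral_congr_fun (measurableSet_dyadicI _ _) fun x hx => ?_
    rw [walsh_two_mul_add hγ hα hx]
    ring
  have h₀ := hchild 0 two_pos
  have h₁ := hchild 1 one_lt_two
  simp only [add_zero, mul_zero, mul_one, pow_zero, one_mul] at h₀ h₁
  rw [dyadicI_eq_union] at hf
  unfold avg
  rw [dyadicI_eq_union, setIntegral_union (disjoint_dyadicI_two_mul k l)
      (measurableSet_dyadicI _ _) (hf.left_of_union.mul_walsh _ _ _)
      (hf.right_of_union.mul_walsh _ _ _), h₀, h₁, zpow_add_one₀ two_ne_zero]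
  ring

lemma avg_two_mul {f : ℝ → ℝ} (hf : IntegrableOn f (dyadicI k l)) :
    avg k l (2 * n) f = (avg (k + 1) (2 * l) n f + avg (k + 1) (2 * l + 1) n f) / 2 := by
  simpa using avg_two_mul_add hf two_pos

lemma avg_two_mul_add_one {f : ℝ → ℝ} (hf : IntegrableOn f (dyadicI k l)) :
    avg k l (2 * n + 1) f = (avg (k + 1) (2 * l) n f - avg (k + 1) (2 * l + 1) n f) / 2 := by
  simpa [sub_eq_add_neg] using avg_two_mul_add hf one_lt_two

lemma avg_mul_of_eq_add {f g p q : ℝ → ℝ} (hf : MemLp f ⊤ volume) (hg : MemLp g ⊤ volume)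
    {a b c d : ℝ} (hp : ∀ y, p y = a * f y + b * g y) (hq : ∀ y, q y = c * f y + d * g y) :
    avg k l n (fun y => p y * q y)
      = a * c * avg k l n (fun y => f y * f y) + b * d * avg k l n (fun y => g y * g y)
        + (a * d + b * c) * avg k l n (fun y => f y * g y) := by
  have hpq : (fun y => p y * q y) = fun y => (a * c * (f y * f y) + b * d * (g y * g y))
      + (a * d + b * c) * (f y * g y) := funext fun y => by rw [hp, hq]; ring
  have hff : MemLp (fun y => a * c * (f y * f y)) ⊤ volume := (hf.mul' hf).const_mul _
  have hgg : MemLp (fun y => b * d * (g y * g y)) ⊤ volume := (hg.mul' hg).const_mul _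
  have hfg : MemLp (fun y => (a * d + b * c) * (f y * g y)) ⊤ volume := (hg.mul' hf).const_mul _
  have hsum : MemLp (fun y => a * c * (f y * f y) + b * d * (g y * g y)) ⊤ volume := hff.add hgg
  rw [hpq, avg_add (hsum.integrableOn_dyadicI k l) (hfg.integrableOn_dyadicI k l),
    avg_add (hff.integrableOn_dyadicI k l) (hgg.integrableOn_dyadicI k l),
    avg_const_mul, avg_const_mul, avg_const_mul]

end avg

lemma memLp_top_indicator_one {α : Type*} [MeasurableSpace α] (μ : Measure α) {s : Set α}
    (hs : MeasurableSet s) : MemLp (s.indicator (1 : α → ℝ)) ⊤ μ :=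
  (memLp_top_const 1).indicator hs

lemma memLp_top_sum_mul_indicator {α ι : Type*} [MeasurableSpace α] (μ : Measure α)
    (s : Finset ι) (a : ι → ℝ) {I : ι → Set α} (hI : ∀ i, MeasurableSet (I i)) :
    MemLp (fun x => ∑ i ∈ s, a i * (I i).indicator 1 x) ⊤ μ :=
  memLp_finsetSum s fun i _ => (memLp_top_indicator_one μ (hI i)).const_mul (a i)

namespace IsDyadicStep

variable {F : ℝ → ℝ → ℝ}

lemma exists_eq_sum_mul_indicator (hF : IsDyadicStep F) :
    ∃ (s : Finset ((ℤ × ℕ) × (ℤ × ℕ))) (c : (ℤ × ℕ) × (ℤ × ℕ) → ℝ), ∀ x y,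
      F x y = ∑ p ∈ s, (c p * (dyadicI p.2.1 p.2.2).indicator 1 y) *
        (dyadicI p.1.1 p.1.2).indicator 1 x := by
  obtain ⟨s, c, -, hF⟩ := hF
  exact ⟨s, c, fun x y => by rw [hF]; exact Finset.sum_congr rfl fun p _ => by ring⟩

lemma memLp_slice (hF : IsDyadicStep F) (y : ℝ) : MemLp (fun x => F x y) ⊤ volume := by
  obtain ⟨s, c, hF⟩ := hF.exists_eq_sum_mul_indicator
  simp only [hF]
  exact memLp_top_sum_mul_indicator _ s _ fun _ => measurableSet_dyadicI _ _

lemma memLp_avg_slice (hF : IsDyadicStep F) (k : ℤ) (l n : ℕ) :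
    MemLp (fun y => avg k l n (fun x => F x y)) ⊤ volume := by
  obtain ⟨s, c, hF⟩ := hF.exists_eq_sum_mul_indicator
  have hslice : ∀ y, avg k l n (fun x => F x y)
      = ∑ p ∈ s, (c p * avg k l n ((dyadicI p.1.1 p.1.2).indicator 1)) *
          (dyadicI p.2.1 p.2.2).indicator 1 y := by
    intro y
    simp only [hF]
    rw [avg_finsetSum _ fun p _ => ((memLp_top_indicator_one volume
      (measurableSet_dyadicI _ _)).const_mul _).integrableOn_dyadicI k l]
    simp only [avg_const_mul]
    exact Finset.sum_congr rfl fun p _ => by ring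
  simp only [hslice]
  exact memLp_top_sum_mul_indicator _ s _ fun _ => measurableSet_dyadicI _ _

end IsDyadicStep

section BoxIdentity

variable {u w : ℕ → ℝ → ℝ}

theorem box_identity (hu₀ : MemLp (u 0) ⊤ volume) (hu₁ : MemLp (u 1) ⊤ volume)
    (hw₀ : ∀ y, w 0 y = (u 0 y + u 1 y) / 2) (hw₁ : ∀ y, w 1 y = (u 0 y - u 1 y) / 2)
    (k : ℤ) (l : ℕ) :
    (1 / 4) * (∑ α ∈ Finset.range 2, ∑ β ∈ Finset.range 2,
        (avg (k + 1) (2 * l + β) 0 (fun y => u α y ^ 2)) ^ 2)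
      - ∑ γ ∈ Finset.range 2, (avg k l 0 (fun y => w γ y ^ 2)) ^ 2
    = (∑ β ∈ Finset.range 2, ∏ γ ∈ Finset.range 2,
        avg (k + 1) (2 * l + β) 0 (fun y => w γ y ^ 2))
      + (∑ γ ∈ Finset.range 2, (avg k l 1 (fun y => w γ y ^ 2)) ^ 2)
      + 4 * ∑ ε ∈ Finset.range 2, (avg k l ε (fun y => w 0 y * w 1 y)) ^ 2 := by
  have hw₀' : ∀ y, w 0 y = 1 / 2 * u 0 y + 1 / 2 * u 1 y := fun y => by rw [hw₀]; ring
  have hw₁' : ∀ y, w 1 y = 1 / 2 * u 0 y + -1 / 2 * u 1 y := fun y => by rw [hw₁]; ring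
  have hsplit : ∀ h : ℝ → ℝ, MemLp h ⊤ volume →
      avg k l 0 h = (avg (k + 1) (2 * l) 0 h + avg (k + 1) (2 * l + 1) 0 h) / 2 ∧
      avg k l 1 h = (avg (k + 1) (2 * l) 0 h - avg (k + 1) (2 * l + 1) 0 h) / 2 :=
    fun h hh => ⟨by simpa using avg_two_mul (n := 0) (hh.integrableOn_dyadicI k l),
      by simpa using avg_two_mul_add_one (n := 0) (hh.integrableOn_dyadicI k l)⟩
  obtain ⟨h00, h00'⟩ := hsplit _ (hu₀.mul' hu₀)
  obtain ⟨h11, h11'⟩ := hsplit _ (hu₁.mul' hu₁)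
  obtain ⟨h01, h01'⟩ := hsplit _ (hu₁.mul' hu₀)
  simp only [Finset.sum_range_succ, Finset.sum_range_zero, Finset.prod_range_succ,
    Finset.prod_range_zero, zero_add, one_mul, add_zero, sq,
    avg_mul_of_eq_add hu₀ hu₁ hw₀' hw₀', avg_mul_of_eq_add hu₀ hu₁ hw₁' hw₁',
    avg_mul_of_eq_add hu₀ hu₁ hw₀' hw₁', h00, h00', h11, h11', h01, h01']
  ring

theorem box_identity_nonneg (hu₀ : MemLp (u 0) ⊤ volume) (hu₁ : MemLp (u 1) ⊤ volume)
    (hw₀ : ∀ y, w 0 y = (u 0 y + u 1 y) / 2) (hw₁ : ∀ y, w 1 y = (u 0 y - u 1 y) / 2)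
    (k : ℤ) (l : ℕ) :
    0 ≤ (1 / 4) * (∑ α ∈ Finset.range 2, ∑ β ∈ Finset.range 2,
        (avg (k + 1) (2 * l + β) 0 (fun y => u α y ^ 2)) ^ 2)
      - ∑ γ ∈ Finset.range 2, (avg k l 0 (fun y => w γ y ^ 2)) ^ 2 := by
  rw [box_identity hu₀ hu₁ hw₀ hw₁]
  have hprod : 0 ≤ ∑ β ∈ Finset.range 2, ∏ γ ∈ Finset.range 2,
      avg (k + 1) (2 * l + β) 0 (fun y => w γ y ^ 2) :=
    Finset.sum_nonneg fun _ _ => Finset.prod_nonneg fun _ _ => avg_zero_nonneg fun _ => sq_nonneg _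
  have hsq : ∀ a : ℕ → ℝ, 0 ≤ ∑ i ∈ Finset.range 2, a i ^ 2 :=
    fun _ => Finset.sum_nonneg fun _ _ => sq_nonneg _
  linarith [hsq fun γ => avg k l 1 (fun y => w γ y ^ 2),
    hsq fun ε => avg k l ε (fun y => w 0 y * w 1 y)]

end BoxIdentity

theorem box_B4 (F₂ : ℝ → ℝ → ℝ) (hF₂ : IsDyadicStep F₂) (k : ℤ) (l₁ l₂ n : ℕ) :
    (1 / 4) * (∑ α ∈ Finset.range 2, ∑ β ∈ Finset.range 2,
        B4 F₂ (k + 1) (2 * l₁ + α) (2 * l₂ + β) n)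
      - (∑ γ ∈ Finset.range 2, B4 F₂ k l₁ l₂ (2 * n + γ))
    = (∑ β ∈ Finset.range 2, ∏ γ ∈ Finset.range 2,
        avg (k + 1) (2 * l₂ + β) 0 (fun y => (avg k l₁ (2 * n + γ) (fun x => F₂ x y)) ^ 2))
      + (∑ γ ∈ Finset.range 2,
        (avg k l₂ 1 (fun y => (avg k l₁ (2 * n + γ) (fun x => F₂ x y)) ^ 2)) ^ 2)
      + 4 * ∑ ε ∈ Finset.range 2,
        (avg k l₂ ε (fun y =>
          avg k l₁ (2 * n) (fun x => F₂ x y) * avg k l₁ (2 * n + 1) (fun x => F₂ x y))) ^ 2 ∧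
    0 ≤ (1 / 4) * (∑ α ∈ Finset.range 2, ∑ β ∈ Finset.range 2,
        B4 F₂ (k + 1) (2 * l₁ + α) (2 * l₂ + β) n)
      - (∑ γ ∈ Finset.range 2, B4 F₂ k l₁ l₂ (2 * n + γ)) := by
  let u : ℕ → ℝ → ℝ := fun α y => avg (k + 1) (2 * l₁ + α) n (fun x => F₂ x y)
  let w : ℕ → ℝ → ℝ := fun γ y => avg k l₁ (2 * n + γ) (fun x => F₂ x y)
  have hu : ∀ α, MemLp (u α) ⊤ volume := fun α => hF₂.memLp_avg_slice (k + 1) (2 * l₁ + α) n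
  have hw₀ : ∀ y, w 0 y = (u 0 y + u 1 y) / 2 :=
    fun y => avg_two_mul ((hF₂.memLp_slice y).integrableOn_dyadicI k l₁)
  have hw₁ : ∀ y, w 1 y = (u 0 y - u 1 y) / 2 :=
    fun y => avg_two_mul_add_one ((hF₂.memLp_slice y).integrableOn_dyadicI k l₁)
  exact ⟨box_identity (hu 0) (hu 1) hw₀ hw₁ k l₂,
    box_identity_nonneg (hu 0) (hu 1) hw₀ hw₁ k l₂⟩
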